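/- arXiv:2503.22833 — 2 statements merged into one kernel-verified Lean document; each statement's English description precedes it below -/
import Mathlib

section
/- Let a, b, c be real numbers with c ≠ 0. With G₂(x) = [[0, ax, 0],[0, 1, 0],[0, cx, 0]], G₁(x) = [[0, 2a, -2ax/c],[0, 0, -2/c],[0, 2c+2/c, -2x]], and G₀ = [[2+4/c², 0, -2a/c],[0, 2+4/c², 0],[0,0,0]], the following symmetry equations hold for all x ∈ ℝ: (i) G₂(x)·W(x) = W(x)·G₂(x)ᵀ; (ii) 2·(G₂·W)'(x) - G₁(x)·W(x) = W(x)·G₁(x)ᵀ; (iii) (G₂·W)''(x) - (G₁·W)'(x) + G₀·W(x) = W(x)·G₀ᵀ, where ' denotes the entrywise derivative in x. -/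
open Matrix

/-- The 3×3 Hermite-type weight matrix. -/
noncomputable def W (a b c : ℝ) (x : ℝ) : Matrix (Fin 3) (Fin 3) ℝ :=
  Real.exp (-x ^ 2) •
    !![Real.exp (2 * b * x) + a ^ 2 * x ^ 2, a * x, a * c * x ^ 2;
       a * x, 1, c * x;
       a * c * x ^ 2, c * x, c ^ 2 * x ^ 2 + 1]

/-- Second-order coefficient of the operator D₂. -/
noncomputable def G2 (a c : ℝ) (x : ℝ) : Matrix (Fin 3) (Fin 3) ℝ :=
  !![0, a * x, 0; 0, 1, 0; 0, c * x, 0]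

/-- First-order coefficient of the operator D₂. -/
noncomputable def G1 (a c : ℝ) (x : ℝ) : Matrix (Fin 3) (Fin 3) ℝ :=
  !![0, 2 * a, -2 * a * x / c;
     0, 0, -2 / c;
     0, 2 * c + 2 / c, -2 * x]

/-- Zeroth-order coefficient of the operator D₂. -/
noncomputable def G0 (a c : ℝ) : Matrix (Fin 3) (Fin 3) ℝ :=
  !![2 + 4 / c ^ 2, 0, -2 * a / c;
     0, 2 + 4 / c ^ 2, 0;
     0, 0, 0]

/-- Entrywise derivative of a matrix-valued function. -/
noncomputable def mderiv (f : ℝ → Matrix (Fin 3) (Fin 3) ℝ) (x : ℝ) :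
    Matrix (Fin 3) (Fin 3) ℝ :=
  Matrix.of fun i j => deriv (fun y => f y i j) x

/-!
Write `W(x) = e^{-x²} (P(x) + e^{2bx} E₀₀)` with `P` a polynomial matrix. Since `G₂` and `G₁`
have vanishing first column they annihilate `E₀₀`, so `G₂W` and `G₁W` are `e^{-x²}` times
polynomial matrices, and so are all their derivatives, as `(e^{-x²} p)' = e^{-x²} (p' - 2xp)`.
The three equations thereby become identities between explicit rational functions of `a`, `c`, `x`.
-/

open Polynomial

noncomputable def gaussianSmul (P : Matrix (Fin 3) (Fin 3) ℝ[X]) (x : ℝ) :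
    Matrix (Fin 3) (Fin 3) ℝ :=
  Real.exp (-x ^ 2) • P.map (eval x)

noncomputable def gaussDeriv (p : ℝ[X]) : ℝ[X] := derivative p - 2 * X * p

theorem hasDerivAt_exp_neg_sq_mul_eval (p : ℝ[X]) (x : ℝ) :
    HasDerivAt (fun y => Real.exp (-y ^ 2) * p.eval y)
      (Real.exp (-x ^ 2) * (gaussDeriv p).eval x) x := by
  have hexp : HasDerivAt (fun y => Real.exp (-y ^ 2)) (Real.exp (-x ^ 2) * -(2 * x)) x := by
    simpa using (hasDerivAt_pow 2 x).neg.exp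
  refine (hexp.fun_mul (p.hasDerivAt x)).congr_deriv ?_
  simp only [gaussDeriv, eval_sub, eval_mul, eval_X, eval_ofNat]
  ring

theorem mderiv_gaussianSmul (P : Matrix (Fin 3) (Fin 3) ℝ[X]) :
    mderiv (gaussianSmul P) = gaussianSmul (P.map gaussDeriv) := by
  funext x
  ext i j
  simp only [mderiv, gaussianSmul, of_apply, Matrix.smul_apply, map_apply, smul_eq_mul]
  exact (hasDerivAt_exp_neg_sq_mul_eval (P i j) x).deriv

theorem map_eval_mul_gaussianSmul (P Q : Matrix (Fin 3) (Fin 3) ℝ[X]) (x : ℝ) :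
    P.map (eval x) * gaussianSmul Q x = gaussianSmul (P * Q) x := by
  rw [gaussianSmul, gaussianSmul, Matrix.mul_smul]
  congr 1
  exact (Matrix.map_mul (f := evalRingHom x)).symm

theorem mul_single_eq_zero_of_col_eq_zero {l m n R : Type*} [Fintype m] [DecidableEq m]
    [DecidableEq n] [NonUnitalNonAssocSemiring R] {M : Matrix l m R} {i : m}
    (hM : ∀ k, M k i = 0) (j : n) (r : R) : M * single i j r = 0 := by
  ext a b
  by_cases hb : b = j
  · subst hb
    simp [hM]
  · exact mul_single_apply_of_ne r i j a b hb M

noncomputable def Wpoly (a c : ℝ) : Matrix (Fin 3) (Fin 3) ℝ[X] :=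
  !![C (a ^ 2) * X ^ 2, C a * X, C (a * c) * X ^ 2;
     C a * X, 1, C c * X;
     C (a * c) * X ^ 2, C c * X, C (c ^ 2) * X ^ 2 + 1]

noncomputable def G2poly (a c : ℝ) : Matrix (Fin 3) (Fin 3) ℝ[X] :=
  !![0, C a * X, 0; 0, 1, 0; 0, C c * X, 0]

noncomputable def G1poly (a c : ℝ) : Matrix (Fin 3) (Fin 3) ℝ[X] :=
  !![0, C (2 * a), C (-2 * a / c) * X;
     0, 0, C (-2 / c);
     0, C (2 * c + 2 / c), -2 * X]

theorem W_eq (a b c x : ℝ) :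
    W a b c x = gaussianSmul (Wpoly a c) x
      + single 0 0 (Real.exp (-x ^ 2) * Real.exp (2 * b * x)) := by
  ext i j
  fin_cases i <;> fin_cases j <;> simp [W, gaussianSmul, Wpoly]
  ring

theorem G2_eq (a c x : ℝ) : G2 a c x = (G2poly a c).map (eval x) := by
  ext i j
  fin_cases i <;> fin_cases j <;> simp [G2, G2poly]

theorem G1_eq (a c x : ℝ) : G1 a c x = (G1poly a c).map (eval x) := by
  ext i j
  fin_cases i <;> fin_cases j <;> simp [G1, G1poly]
  ring

theorem G2_mul_W (a b c x : ℝ) :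
    G2 a c x * W a b c x = gaussianSmul (G2poly a c * Wpoly a c) x := by
  rw [W_eq, mul_add, mul_single_eq_zero_of_col_eq_zero, G2_eq, map_eval_mul_gaussianSmul,
    add_zero]
  intro k
  fin_cases k <;> simp [G2]

theorem G1_mul_W (a b c x : ℝ) :
    G1 a c x * W a b c x = gaussianSmul (G1poly a c * Wpoly a c) x := by
  rw [W_eq, mul_add, mul_single_eq_zero_of_col_eq_zero, G1_eq, map_eval_mul_gaussianSmul,
    add_zero]
  intro k
  fin_cases k <;> simp [G1]

/-- the symmetry equations for the operator D₂ = ∂²G₂ + ∂G₁ + G₀. -/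
theorem symmetry_equations_D2 (a b c : ℝ) (hc : c ≠ 0) (x : ℝ) :
    G2 a c x * W a b c x = W a b c x * (G2 a c x)ᵀ ∧
    (2 : ℝ) • mderiv (fun y => G2 a c y * W a b c y) x - G1 a c x * W a b c x
        = W a b c x * (G1 a c x)ᵀ ∧
    mderiv (mderiv (fun y => G2 a c y * W a b c y)) x
        - mderiv (fun y => G1 a c y * W a b c y) x
        + G0 a c * W a b c x = W a b c x * (G0 a c)ᵀ := by
  simp only [G2_mul_W, G1_mul_W, mderiv_gaussianSmul]
  refine ⟨?_, ?_, ?_⟩ <;> ext i j <;> fin_cases i <;> fin_cases j <;>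
    simp [gaussianSmul, W, G2, G1, G0, Wpoly, G2poly, G1poly, gaussDeriv, mul_apply,
      Fin.sum_univ_three, derivative_pow] <;> field_simp <;> ring
end

section
/- Let a, b, c be real numbers. For all natural numbers n ≠ m, the matrix-valued function x ↦ Qₙ(x)·W(x)·Qₘ(x)ᵀ is entrywise integrable on ℝ and ∫_ℝ Qₙ(x)·W(x)·Qₘ(x)ᵀ dx = 0; that is, {Qₙ} is a sequence of orthogonal polynomials for W. -/
/-!
With `v(x) = (a x, 1, c x)` the weight splits as `W = e^{-x²} (e^{2bx} e₀e₀ᵀ + v vᵀ + e₂e₂ᵀ)`, so every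
entry of `Qₙ W Qₘᵀ` is `e^{2bx - x²}` times a product of entries of the first columns of `Qₙ, Qₘ`,
plus `e^{-x²}` times products of entries of `Qₖ v = (a h_{k+1}, h_k, c h_{k+1})` and of the third
columns. The substitution `x ↦ x + b` turns `e^{2bx - x²}` into `e^{b²} e^{-x²}` and the first column
of `Qₖ` into `(h_k, -(a e^{-b²} k / 2) h_{k-1}, 0)`. Everything is then a value of the functional
`L p = ∫ p e^{-x²}`, and integration by parts together with `h_k' = k h_{k-1}` gives
`L (h_{n+1} h_m) = (m / 2) L (h_n h_{m-1})`: this yields both the orthogonality of the `h_k` and the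
cancellation of the terms that do not vanish individually.
-/

open Matrix Polynomial MeasureTheory

/-- The monic Hermite polynomials for the weight e^{-x²}:
h₀ = 1, h_{n+1}(x) = x·hₙ(x) - (1/2)·hₙ'(x). -/
noncomputable def h : ℕ → Polynomial ℝ
  | 0 => 1
  | n + 1 => X * h n - C (1 / 2 : ℝ) * derivative (h n)

/-- The sequence Qₙ of matrix orthogonal polynomials for W. -/
noncomputable def Qmat (a b c : ℝ) (n : ℕ) : Matrix (Fin 3) (Fin 3) (Polynomial ℝ) :=
  !![(h n).comp (X - C b),
     C a * (h (n + 1) - (h n).comp (X - C b) * X),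
     0;
     -(C (a * Real.exp (-b ^ 2) * n / 2)) * (h (n - 1)).comp (X - C b),
     C (a ^ 2 * Real.exp (-b ^ 2) * n / 2) * (h (n - 1)).comp (X - C b) * X
       + h n + C (c ^ 2 * n / 2) * h (n - 1) * X,
     -(C (c * n / 2)) * h (n - 1);
     0,
     C c * (h (n + 1) - h n * X),
     h n]

/-- Entrywise evaluation of a matrix polynomial. -/
noncomputable def evalM (P : Matrix (Fin 3) (Fin 3) (Polynomial ℝ)) (x : ℝ) :
    Matrix (Fin 3) (Fin 3) ℝ :=
  P.map (Polynomial.eval x)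

open Real

lemma derivative_h_succ (n : ℕ) : derivative (h (n + 1)) = C ((n : ℝ) + 1) * h n := by
  induction n with
  | zero => simp [h]
  | succ n ih =>
    rw [h, derivative_sub, derivative_mul, derivative_X, derivative_C_mul, ih, derivative_C_mul, h]
    simp only [Nat.cast_add, Nat.cast_one, map_add, map_one]
    ring

lemma derivative_h (n : ℕ) : derivative (h n) = C (n : ℝ) * h (n - 1) := by
  cases n with
  | zero => simp [h]
  | succ n => simpa using derivative_h_succ n

lemma integrable_eval_mul_exp_neg_sq (p : ℝ[X]) :
    Integrable fun x => p.eval x * exp (-x ^ 2) := by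
  have monomial (k : ℕ) : Integrable fun x : ℝ => x ^ k * exp (-x ^ 2) := by
    simpa [rpow_natCast] using
      integrable_rpow_mul_exp_neg_mul_sq one_pos (neg_one_lt_zero.trans_le k.cast_nonneg)
  simp_rw [eval_eq_sum_range, Finset.sum_mul, mul_assoc]
  exact integrable_finsetSum _ fun k _ => (monomial k).const_mul _

noncomputable def gaussianFunctional : ℝ[X] →ₗ[ℝ] ℝ where
  toFun p := ∫ x, p.eval x * exp (-x ^ 2)
  map_add' p q := by
    simp only [eval_add, add_mul]
    exact integral_add (integrable_eval_mul_exp_neg_sq p) (integrable_eval_mul_exp_neg_sq q)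
  map_smul' r p := by
    simp only [eval_smul, smul_eq_mul, mul_assoc, RingHom.id_apply]
    exact integral_const_mul r _

lemma gaussianFunctional_apply (p : ℝ[X]) :
    gaussianFunctional p = ∫ x, p.eval x * exp (-x ^ 2) := rfl

lemma gaussianFunctional_derivative (p : ℝ[X]) :
    gaussianFunctional (derivative p) = 2 * gaussianFunctional (X * p) := by
  have hderiv (x : ℝ) : HasDerivAt (fun y => p.eval y * exp (-y ^ 2))
      ((derivative p - C 2 * X * p).eval x * exp (-x ^ 2)) x := by
    refine ((p.hasDerivAt x).fun_mul (hasDerivAt_pow 2 x).fun_neg.exp).congr_deriv ?_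
    simp only [eval_sub, eval_mul, eval_C, eval_X, Nat.cast_ofNat]
    ring
  have := integral_eq_zero_of_hasDerivAt_of_integrable hderiv
    (integrable_eval_mul_exp_neg_sq _) (integrable_eval_mul_exp_neg_sq p)
  rw [← gaussianFunctional_apply, mul_assoc, C_mul', map_sub, map_smul] at this
  simpa [sub_eq_zero] using this

lemma gaussianFunctional_mul_h_succ (p : ℝ[X]) (n : ℕ) :
    gaussianFunctional (p * h (n + 1)) = 1 / 2 * gaussianFunctional (derivative p * h n) := by
  have ibp := gaussianFunctional_derivative (p * h n)
  rw [derivative_mul, map_add] at ibp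
  have expand : p * h (n + 1) = X * (p * h n) - (1 / 2 : ℝ) • (p * derivative (h n)) := by
    rw [h, ← C_mul']; ring
  rw [expand, map_sub, map_smul, smul_eq_mul]
  linarith

lemma gaussianFunctional_h_succ_mul_h (n m : ℕ) :
    gaussianFunctional (h (n + 1) * h m) = m / 2 * gaussianFunctional (h n * h (m - 1)) := by
  rw [mul_comm, gaussianFunctional_mul_h_succ, derivative_h, mul_assoc, C_mul', map_smul,
    smul_eq_mul, mul_comm (h (m - 1))]
  ring

lemma gaussianFunctional_h_mul_h_succ (n m : ℕ) :
    gaussianFunctional (h n * h (m + 1)) = n / 2 * gaussianFunctional (h (n - 1) * h m) := by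
  rw [mul_comm, gaussianFunctional_h_succ_mul_h, mul_comm (h m)]

lemma gaussianFunctional_h_mul_h_of_ne {i j : ℕ} (hij : i ≠ j) :
    gaussianFunctional (h i * h j) = 0 := by
  induction i generalizing j with
  | zero =>
    obtain ⟨k, rfl⟩ := Nat.exists_eq_succ_of_ne_zero hij.symm
    simp [mul_comm (h 0), gaussianFunctional_h_succ_mul_h]
  | succ n ih =>
    rw [gaussianFunctional_h_succ_mul_h]
    cases j with
    | zero => simp
    | succ k => rw [Nat.add_sub_cancel, ih (by omega), mul_zero]

lemma eval_mul_exp_mul_exp_neg_sq (p : ℝ[X]) (b x : ℝ) :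
    p.eval x * (exp (2 * b * x) * exp (-x ^ 2)) =
      exp (b ^ 2) * ((p.comp (X + C b)).eval (x - b) * exp (-(x - b) ^ 2)) := by
  have hexp : exp (2 * b * x) * exp (-x ^ 2) = exp (b ^ 2) * exp (-(x - b) ^ 2) := by
    rw [← exp_add, ← exp_add]; ring_nf
  rw [eval_comp, eval_add, eval_X, eval_C, sub_add_cancel, hexp, mul_left_comm]

lemma integrable_eval_mul_exp_mul_exp_neg_sq (p : ℝ[X]) (b : ℝ) :
    Integrable fun x => p.eval x * (exp (2 * b * x) * exp (-x ^ 2)) := by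
  simp_rw [eval_mul_exp_mul_exp_neg_sq]
  exact ((integrable_eval_mul_exp_neg_sq _).comp_sub_right b).const_mul _

lemma integral_eval_mul_exp_mul_exp_neg_sq (p : ℝ[X]) (b : ℝ) :
    ∫ x, p.eval x * (exp (2 * b * x) * exp (-x ^ 2)) =
      exp (b ^ 2) * gaussianFunctional (p.comp (X + C b)) := by
  simp_rw [eval_mul_exp_mul_exp_neg_sq]
  rw [integral_const_mul,
    integral_sub_right_eq_self (fun x => (p.comp (X + C b)).eval x * exp (-x ^ 2)) b]
  rfl

theorem Matrix.mul_vecMulVec_mul_transpose {l m n R : Type*} [CommSemiring R] [Fintype n]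
    (A : Matrix l n R) (B : Matrix m n R) (u v : n → R) :
    A * vecMulVec u v * Bᵀ = vecMulVec (A *ᵥ u) (B *ᵥ v) := by
  rw [mul_vecMulVec, vecMulVec_mul, vecMul_transpose]

noncomputable def weightVec (a c : ℝ) : Fin 3 → ℝ[X] := ![C a * X, 1, C c * X]

lemma W_eq_sum_vecMulVec (a b c x : ℝ) :
    W a b c x = exp (-x ^ 2) • (exp (2 * b * x) • vecMulVec (Pi.single 0 1) (Pi.single 0 1) +
      vecMulVec (fun k => (weightVec a c k).eval x) (fun k => (weightVec a c k).eval x) +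
      vecMulVec (Pi.single 2 1) (Pi.single 2 1)) := by
  ext i j
  fin_cases i <;> fin_cases j <;> simp [W, weightVec, vecMulVec_apply] <;> ring

lemma Qmat_mulVec_weightVec (a b c : ℝ) (n : ℕ) :
    Qmat a b c n *ᵥ weightVec a c = ![C a * h (n + 1), h n, C c * h (n + 1)] := by
  ext i : 1
  fin_cases i <;>
    simp [Qmat, weightVec, mulVec, dotProduct, Fin.sum_univ_three, div_eq_mul_inv, C_mul, C_pow] <;>
    ring

lemma Qmat_zero_comp (a b c : ℝ) (n : ℕ) (i : Fin 3) :
    (Qmat a b c n i 0).comp (X + C b) = ![h n, -C (a * exp (-b ^ 2) * n / 2) * h (n - 1), 0] i := by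
  fin_cases i <;> simp [Qmat, mul_comp, comp_assoc]

lemma evalM_Qmat_mul_W_mul_transpose_apply (a b c x : ℝ) (n m : ℕ) (i j : Fin 3) :
    (evalM (Qmat a b c n) x * W a b c x * (evalM (Qmat a b c m) x)ᵀ) i j =
      (Qmat a b c n i 0 * Qmat a b c m j 0).eval x * (exp (2 * b * x) * exp (-x ^ 2)) +
      ((Qmat a b c n *ᵥ weightVec a c) i * (Qmat a b c m *ᵥ weightVec a c) j +
        Qmat a b c n i 2 * Qmat a b c m j 2).eval x * exp (-x ^ 2) := by
  have evalM_mulVec (P : Matrix (Fin 3) (Fin 3) ℝ[X]) :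
      evalM P x *ᵥ (fun k => (weightVec a c k).eval x) = fun k => ((P *ᵥ weightVec a c) k).eval x :=
    funext fun k => (RingHom.map_mulVec (evalRingHom x) P _ k).symm
  rw [W_eq_sum_vecMulVec]
  simp only [Matrix.mul_smul, Matrix.smul_mul, Matrix.mul_add, Matrix.add_mul,
    mul_vecMulVec_mul_transpose, mulVec_single_one, evalM_mulVec, Matrix.smul_apply,
    Matrix.add_apply, vecMulVec_apply, col_apply, smul_eq_mul, eval_mul, eval_add]
  simp only [evalM, map_apply]
  ring

lemma Qmat_pairing_eq_zero (a b c : ℝ) {n m : ℕ} (hnm : n ≠ m) (i j : Fin 3) :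
    exp (b ^ 2) * gaussianFunctional ((Qmat a b c n i 0 * Qmat a b c m j 0).comp (X + C b)) +
      gaussianFunctional ((Qmat a b c n *ᵥ weightVec a c) i * (Qmat a b c m *ᵥ weightVec a c) j +
        Qmat a b c n i 2 * Qmat a b c m j 2) = 0 := by
  have orth := gaussianFunctional_h_mul_h_of_ne hnm
  have orth_succ := gaussianFunctional_h_mul_h_of_ne (i := n + 1) (j := m + 1) (by omega)
  have orth_pred : (n : ℝ) * m * gaussianFunctional (h (n - 1) * h (m - 1)) = 0 := by
    rcases n with _ | n
    · simp
    rcases m with _ | m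
    · simp
    rw [gaussianFunctional_h_mul_h_of_ne (by omega), mul_zero]
  have hexp : exp (b ^ 2) * exp (-b ^ 2) = 1 := by rw [← exp_add, add_neg_cancel, exp_zero]
  rw [mul_comp, Qmat_zero_comp, Qmat_zero_comp, Qmat_mulVec_weightVec, Qmat_mulVec_weightVec]
  fin_cases i <;> fin_cases j <;>
    simp [Qmat, C_mul', orth, orth_succ, gaussianFunctional_h_succ_mul_h,
      gaussianFunctional_h_mul_h_succ]
  · linear_combination (-(a * m / 2 * gaussianFunctional (h n * h (m - 1)))) * hexp
  · linear_combination (-(a * n / 2 * gaussianFunctional (h (n - 1) * h m))) * hexp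
  · linear_combination (a ^ 2 * exp (b ^ 2) * exp (-b ^ 2) ^ 2 / 4 + c ^ 2 / 4) * orth_pred
  · ring
  · ring

/-- {Qₙ} is a sequence of orthogonal polynomials for W: for n ≠ m the
function x ↦ Qₙ(x)·W(x)·Qₘ(x)ᵀ is entrywise integrable on ℝ with integral zero. -/
theorem Q_orthogonal (a b c : ℝ) (n m : ℕ) (hnm : n ≠ m) :
    (∀ i j, Integrable
        (fun x => (evalM (Qmat a b c n) x * W a b c x * (evalM (Qmat a b c m) x)ᵀ) i j)) ∧
    (∀ i j, (∫ x, (evalM (Qmat a b c n) x * W a b c x * (evalM (Qmat a b c m) x)ᵀ) i j)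
        = 0) := by
  simp_rw [evalM_Qmat_mul_W_mul_transpose_apply]
  refine ⟨fun i j => (integrable_eval_mul_exp_mul_exp_neg_sq _ b).add
    (integrable_eval_mul_exp_neg_sq _), fun i j => ?_⟩
  rw [integral_add (integrable_eval_mul_exp_mul_exp_neg_sq _ b) (integrable_eval_mul_exp_neg_sq _),
    integral_eval_mul_exp_mul_exp_neg_sq, ← gaussianFunctional_apply]
  exact Qmat_pairing_eq_zero a b c hnm i j
end
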